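/- arXiv:1603.01944 — 4 statements merged into one kernel-verified Lean document; each statement's English description precedes it below -/
import Mathlib

section
/- Let H = -Δ + V be a discrete Schrödinger operator on ℓ²(ℤ), where V is a bounded multiplication operator. For a > 0, let T_a be the weight operator (T_a u)(j) = e^{a|j|}u(j). Then T_a H T_a^{-1} = H + B_a where B_a is a bounded operator on ℓ²(ℤ) with ‖B_a‖ ≤ C·a for a constant C independent of a (for small a > 0). -/
/-!
The potential commutes with the weight, so only the Laplacian contributes to
`B_a = T_a H T_a⁻¹ - H`, and `(B_a u)(j)` is a combination of `u (j + 1)` and `u (j - 1)` with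
coefficients `e^{a(|j| - |j ± 1|)} - 1`. Since `||j| - |j ± 1|| ≤ 1`, these are `O(a)`, and the
shifts are isometries of `ℓ²(ℤ)`.
-/

/-- Discrete Laplacian on `ℤ`. -/
noncomputable def discLap (u : ℤ → ℂ) : ℤ → ℂ := fun j => u (j + 1) - 2 * u j + u (j - 1)

/-- Exponential weight operator `(T_a u)(j) = e^{a|j|} u(j)`. -/
noncomputable def Tw (a : ℝ) (u : ℤ → ℂ) : ℤ → ℂ := fun j => (Real.exp (a * |(j : ℝ)|) : ℝ) * u j

/-- Discrete Schrödinger operator `H = -Δ + V`. -/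
noncomputable def schrodOp (V : ℤ → ℝ) (u : ℤ → ℂ) : ℤ → ℂ :=
  fun j => -(discLap u j) + (V j : ℂ) * u j

lemma abs_exp_mul_abs_sub_abs_sub_one_le {a x y : ℝ} (ha₀ : 0 ≤ a) (ha₁ : a ≤ 1)
    (hxy : |x - y| ≤ 1) : |Real.exp (a * (|x| - |y|)) - 1| ≤ 2 * a := by
  have hdiff : |a * (|x| - |y|)| ≤ a := by
    rw [abs_mul, abs_of_nonneg ha₀]
    exact mul_le_of_le_one_right ha₀ ((abs_abs_sub_abs_le_abs_sub x y).trans hxy)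
  calc |Real.exp (a * (|x| - |y|)) - 1| ≤ 2 * |a * (|x| - |y|)| :=
        Real.abs_exp_sub_one_le (hdiff.trans ha₁)
    _ ≤ 2 * a := by linarith

lemma Tw_schrodOp_Tw_neg_sub_schrodOp_apply (a : ℝ) (V : ℤ → ℝ) (u : ℤ → ℂ) (j : ℤ) :
    Tw a (schrodOp V (Tw (-a) u)) j - schrodOp V u j =
      -((((Real.exp (a * (|(j : ℝ)| - |((j + 1 : ℤ) : ℝ)|)) - 1 : ℝ)) : ℂ) * u (j + 1) +
        (((Real.exp (a * (|(j : ℝ)| - |((j - 1 : ℤ) : ℝ)|)) - 1 : ℝ)) : ℂ) * u (j - 1)) := by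
  simp only [Tw, schrodOp, discLap, mul_sub, Real.exp_sub, neg_mul, Real.exp_neg]
  have : ((Real.exp (a * |(j : ℝ)|) : ℝ) : ℂ) ≠ 0 := by exact_mod_cast (Real.exp_pos _).ne'
  push_cast
  field_simp
  ring

lemma norm_Tw_schrodOp_Tw_neg_sub_schrodOp_apply_le {a : ℝ} (ha₀ : 0 ≤ a) (ha₁ : a ≤ 1)
    (V : ℤ → ℝ) (u : ℤ → ℂ) (j : ℤ) :
    ‖Tw a (schrodOp V (Tw (-a) u)) j - schrodOp V u j‖ ≤
      2 * a * (‖u (j + 1)‖ + ‖u (j - 1)‖) := by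
  have hcoeff : ∀ k : ℤ, |(j : ℝ) - k| ≤ 1 →
      ‖(((Real.exp (a * (|(j : ℝ)| - |(k : ℝ)|)) - 1 : ℝ)) : ℂ)‖ ≤ 2 * a := fun k hk => by
    rw [Complex.norm_real, Real.norm_eq_abs]
    exact abs_exp_mul_abs_sub_abs_sub_one_le ha₀ ha₁ hk
  rw [Tw_schrodOp_Tw_neg_sub_schrodOp_apply, norm_neg]
  refine (norm_add_le _ _).trans ?_
  rw [norm_mul, norm_mul, mul_add]
  gcongr
  · exact hcoeff _ (by push_cast; simp)
  · exact hcoeff _ (by push_cast; simp)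

lemma tsum_le_of_le_mul_add_translates {G : Type*} [AddGroup G] {f g : G → ℝ} {c : ℝ} (s : G)
    (hf₀ : ∀ j, 0 ≤ f j) (hf : ∀ j, f j ≤ c * (g (j + s) + g (j - s))) (hg : Summable g) :
    ∑' j, f j ≤ 2 * c * ∑' j, g j := by
  have hg_add : Summable fun j => g (j + s) := (Equiv.addRight s).summable_iff.2 hg
  have hg_sub : Summable fun j => g (j - s) := (Equiv.subRight s).summable_iff.2 hg
  have hbound : Summable fun j => c * (g (j + s) + g (j - s)) := (hg_add.add hg_sub).mul_left c
  calc ∑' j, f j ≤ ∑' j, c * (g (j + s) + g (j - s)) :=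
        (hbound.of_nonneg_of_le hf₀ hf).tsum_le_tsum hf hbound
    _ = c * (∑' j, g (j + s) + ∑' j, g (j - s)) := by rw [tsum_mul_left, hg_add.tsum_add hg_sub]
    _ = 2 * c * ∑' j, g j := by
        rw [show ∑' j, g (j + s) = ∑' j, g j from (Equiv.addRight s).tsum_eq g,
          show ∑' j, g (j - s) = ∑' j, g j from (Equiv.subRight s).tsum_eq g]
        ring

theorem stmt2_general (V : ℤ → ℝ) :
    ∃ C > 0, ∀ a : ℝ, 0 < a → a ≤ 1 → ∀ u : ℤ → ℂ,
      Summable (fun j : ℤ => ‖u j‖ ^ 2) →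
      (∑' j : ℤ, ‖Tw a (schrodOp V (Tw (-a) u)) j - schrodOp V u j‖ ^ 2)
        ≤ (C * a) ^ 2 * ∑' j : ℤ, ‖u j‖ ^ 2 := by
  refine ⟨4, by norm_num, fun a ha₀ ha₁ u hu => ?_⟩
  have hsq : ∀ j : ℤ, ‖Tw a (schrodOp V (Tw (-a) u)) j - schrodOp V u j‖ ^ 2 ≤
      8 * a ^ 2 * (‖u (j + 1)‖ ^ 2 + ‖u (j - 1)‖ ^ 2) := fun j => by
    have h := norm_Tw_schrodOp_Tw_neg_sub_schrodOp_apply_le ha₀.le ha₁ V u j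
    calc _ ≤ (2 * a * (‖u (j + 1)‖ + ‖u (j - 1)‖)) ^ 2 := by gcongr
      _ ≤ 8 * a ^ 2 * (‖u (j + 1)‖ ^ 2 + ‖u (j - 1)‖ ^ 2) := by
        nlinarith [sq_nonneg (‖u (j + 1)‖ - ‖u (j - 1)‖)]
  calc _ ≤ 2 * (8 * a ^ 2) * ∑' j : ℤ, ‖u j‖ ^ 2 :=
        tsum_le_of_le_mul_add_translates (g := fun j => ‖u j‖ ^ 2) 1 (fun _ => by positivity) hsq hu
    _ = (4 * a) ^ 2 * ∑' j : ℤ, ‖u j‖ ^ 2 := by ring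

/-- `T_a H T_a^{-1} = H + B_a` with `‖B_a‖ ≤ C·a` on `ℓ²(ℤ)`, `B_a := T_a H T_a^{-1} - H`,
for a constant `C` independent of (small) `a`. -/
theorem stmt2 (V : ℤ → ℝ) (hV : ∃ M : ℝ, ∀ j, |V j| ≤ M) :
    ∃ C > 0, ∀ a : ℝ, 0 < a → a ≤ 1 → ∀ u : ℤ → ℂ,
      Summable (fun j : ℤ => ‖u j‖ ^ 2) →
      (∑' j : ℤ, ‖Tw a (schrodOp V (Tw (-a) u)) j - schrodOp V u j‖ ^ 2)
        ≤ (C * a) ^ 2 * ∑' j : ℤ, ‖u j‖ ^ 2 :=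
  stmt2_general V
end

section
/- Let H be a self-adjoint operator on ℓ²(ℤ) with an isolated simple eigenvalue e and normalized eigenfunction φ, and let B_a be a family of bounded operators with ‖B_a‖ ≤ Ca. For sufficiently small a > 0, the fixed point equation u = (H - e)^{-1} P_c( (⟨B_a(φ+u), φ⟩ - B_a)(φ+u) ) has a solution u_a in the ball of radius 2C₀a in ℓ²(ℤ), where P_c is the orthogonal projection onto the orthogonal complement of φ and C₀ depends only on ‖(H-e)^{-1}P_c‖ and C. Consequently, setting e_a = e + ⟨B_a(φ+u_a), φ⟩ and φ_a = φ + u_a, one has (H + B_a)φ_a = e_a φ_a and e_a → e as a → 0. -/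
/-!
Write `w = φ + u` and `Ψ u = R (⟪B w, φ⟫ • w - B w)`. On the unit ball `‖w‖ ≤ 2`, so `Ψ` is
bounded by `6‖R‖‖B‖` and `5‖R‖‖B‖`-Lipschitz; for `‖B_a‖ ≤ Ca` small it is therefore a contraction
of the ball of radius `2C₀a` into itself, and Banach's theorem gives the fixed point `u_a`.
Since `u_a = R(…)` is orthogonal to `φ`, `⟪w, φ⟫ = 1`, so `⟪B_a w, φ⟫ • w - B_a w` is orthogonal to
`φ` as well; there `R` inverts `H - e`, and the fixed point equation unfolds to
`(H + B_a) w = (e + ⟪B_a w, φ⟫) • w`.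
-/

open RealInnerProductSpace Metric Set Filter Topology Function
open scoped NNReal

theorem exists_mem_isFixedPt_of_lipschitzOnWith {α : Type*} [MetricSpace α] {f : α → α}
    {s : Set α} {K : ℝ≥0} (hK : K < 1) (hsc : IsComplete s) (hsf : MapsTo f s s)
    (hf : LipschitzOnWith K f s) (hs : s.Nonempty) : ∃ y ∈ s, IsFixedPt f y := by
  obtain ⟨x, hx⟩ := hs
  obtain ⟨y, hys, hy, -⟩ :=
    ContractingWith.exists_fixedPoint' hsc hsf ⟨hK, hf.mapsToRestrict hsf⟩ hx (edist_ne_top _ _)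
  exact ⟨y, hys, hy⟩

section Perturbation

variable {E : Type*} [NormedAddCommGroup E] [InnerProductSpace ℝ E]

theorem abs_inner_apply_le_of_norm_le_one (B : E →L[ℝ] E) {φ : E} (hφ : ‖φ‖ ≤ 1) (w : E) :
    |⟪B w, φ⟫| ≤ ‖B‖ * ‖w‖ :=
  calc |⟪B w, φ⟫| ≤ ‖B w‖ * ‖φ‖ := abs_real_inner_le_norm _ _
    _ ≤ ‖B w‖ := mul_le_of_le_one_right (norm_nonneg _) hφ
    _ ≤ ‖B‖ * ‖w‖ := B.le_opNorm w

theorem norm_inner_smul_sub_apply_le (B : E →L[ℝ] E) {φ : E} (hφ : ‖φ‖ ≤ 1) (w : E) :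
    ‖⟪B w, φ⟫ • w - B w‖ ≤ ‖B‖ * ‖w‖ * (‖w‖ + 1) :=
  calc ‖⟪B w, φ⟫ • w - B w‖ ≤ |⟪B w, φ⟫| * ‖w‖ + ‖B w‖ := by
        simpa only [norm_smul, Real.norm_eq_abs] using norm_sub_le (⟪B w, φ⟫ • w) (B w)
    _ ≤ ‖B‖ * ‖w‖ * ‖w‖ + ‖B‖ * ‖w‖ := by
        gcongr
        exacts [abs_inner_apply_le_of_norm_le_one B hφ w, B.le_opNorm w]
    _ = ‖B‖ * ‖w‖ * (‖w‖ + 1) := by ring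

theorem norm_inner_smul_sub_apply_sub_le (B : E →L[ℝ] E) {φ : E} (hφ : ‖φ‖ ≤ 1) (w w' : E) :
    ‖(⟪B w, φ⟫ • w - B w) - (⟪B w', φ⟫ • w' - B w')‖ ≤ ‖B‖ * (‖w‖ + ‖w'‖ + 1) * ‖w - w'‖ := by
  have hsplit : (⟪B w, φ⟫ • w - B w) - (⟪B w', φ⟫ • w' - B w') =
      ⟪B (w - w'), φ⟫ • w + ⟪B w', φ⟫ • (w - w') - B (w - w') := by
    simp only [map_sub, inner_sub_left]
    module
  rw [hsplit]
  calc ‖⟪B (w - w'), φ⟫ • w + ⟪B w', φ⟫ • (w - w') - B (w - w')‖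
      ≤ |⟪B (w - w'), φ⟫| * ‖w‖ + |⟪B w', φ⟫| * ‖w - w'‖ + ‖B (w - w')‖ := by
        refine (norm_sub_le _ _).trans (add_le_add_left ((norm_add_le _ _).trans ?_) _)
        simp only [norm_smul, Real.norm_eq_abs, le_refl]
    _ ≤ ‖B‖ * ‖w - w'‖ * ‖w‖ + ‖B‖ * ‖w'‖ * ‖w - w'‖ + ‖B‖ * ‖w - w'‖ := by
        gcongr
        exacts [abs_inner_apply_le_of_norm_le_one B hφ _,
          abs_inner_apply_le_of_norm_le_one B hφ _, B.le_opNorm _]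
    _ = ‖B‖ * (‖w‖ + ‖w'‖ + 1) * ‖w - w'‖ := by ring

/-- The map `u ↦ (H - e)⁻¹ P_c ((⟪B (φ + u), φ⟫ - B) (φ + u))` of the fixed point equation,
with `R = (H - e)⁻¹ P_c`. -/
def perturbationMap (R B : E →L[ℝ] E) (φ u : E) : E :=
  R (⟪B (φ + u), φ⟫ • (φ + u) - B (φ + u))

variable {R B : E →L[ℝ] E} {φ : E}

theorem norm_perturbationMap_le (hφ : ‖φ‖ ≤ 1) {u : E} (hu : ‖u‖ ≤ 1) :
    ‖perturbationMap R B φ u‖ ≤ 6 * ‖R‖ * ‖B‖ := by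
  have hw : ‖φ + u‖ ≤ 2 := (norm_add_le_of_le hφ hu).trans_eq one_add_one_eq_two
  calc ‖perturbationMap R B φ u‖ ≤ ‖R‖ * (‖B‖ * ‖φ + u‖ * (‖φ + u‖ + 1)) :=
        R.le_opNorm_of_le (norm_inner_smul_sub_apply_le B hφ _)
    _ ≤ ‖R‖ * (‖B‖ * 2 * (2 + 1)) := by gcongr
    _ = 6 * ‖R‖ * ‖B‖ := by ring

theorem norm_perturbationMap_sub_le (hφ : ‖φ‖ ≤ 1) {u v : E} (hu : ‖u‖ ≤ 1) (hv : ‖v‖ ≤ 1) :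
    ‖perturbationMap R B φ u - perturbationMap R B φ v‖ ≤ 5 * ‖R‖ * ‖B‖ * ‖u - v‖ := by
  have hwu : ‖φ + u‖ ≤ 2 := (norm_add_le_of_le hφ hu).trans_eq one_add_one_eq_two
  have hwv : ‖φ + v‖ ≤ 2 := (norm_add_le_of_le hφ hv).trans_eq one_add_one_eq_two
  have hdiff := norm_inner_smul_sub_apply_sub_le B hφ (φ + u) (φ + v)
  rw [add_sub_add_left_eq_sub] at hdiff
  calc ‖perturbationMap R B φ u - perturbationMap R B φ v‖
      ≤ ‖R‖ * (‖B‖ * (‖φ + u‖ + ‖φ + v‖ + 1) * ‖u - v‖) := by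
        rw [perturbationMap, perturbationMap, ← map_sub]
        exact R.le_opNorm_of_le hdiff
    _ ≤ ‖R‖ * (‖B‖ * (2 + 2 + 1) * ‖u - v‖) := by gcongr
    _ = 5 * ‖R‖ * ‖B‖ * ‖u - v‖ := by ring

theorem exists_perturbationMap_eq_self [CompleteSpace E] (hφ : ‖φ‖ ≤ 1) {r : ℝ} (hr : r ≤ 1)
    (hRB : 6 * ‖R‖ * ‖B‖ ≤ r) : ∃ u, ‖u‖ ≤ r ∧ perturbationMap R B φ u = u := by
  have hRB0 : 0 ≤ ‖R‖ * ‖B‖ := by positivity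
  have hball : ∀ u ∈ closedBall (0 : E) r, ‖u‖ ≤ 1 := fun u hu =>
    (mem_closedBall_zero_iff.mp hu).trans hr
  have hmaps : MapsTo (perturbationMap R B φ) (closedBall 0 r) (closedBall 0 r) := fun u hu =>
    mem_closedBall_zero_iff.mpr ((norm_perturbationMap_le hφ (hball u hu)).trans hRB)
  have hlip : LipschitzOnWith (5 * ‖R‖ * ‖B‖).toNNReal (perturbationMap R B φ) (closedBall 0 r) :=
    LipschitzOnWith.of_dist_le' fun u hu v hv => by
      simpa only [dist_eq_norm] using norm_perturbationMap_sub_le hφ (hball u hu) (hball v hv)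
  have hK : (5 * ‖R‖ * ‖B‖).toNNReal < 1 := by
    rw [Real.toNNReal_lt_one]
    linarith
  obtain ⟨u, hu, hfix⟩ := exists_mem_isFixedPt_of_lipschitzOnWith hK isClosed_closedBall.isComplete hmaps
    hlip ⟨0, mem_closedBall_self (hRB0.trans (by linarith))⟩
  exact ⟨u, mem_closedBall_zero_iff.mp hu, hfix⟩

theorem add_apply_eq_smul_of_perturbationMap_eq_self {H : E →L[ℝ] E} {e : ℝ} (hφ : ‖φ‖ = 1)
    (heig : H φ = e • φ) (hR : ∀ u, H (R u) - e • R u = u - ⟪u, φ⟫ • φ)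
    (hRorth : ∀ u, ⟪R u, φ⟫ = 0) {u : E} (hu : perturbationMap R B φ u = u) :
    (H + B) (φ + u) = (e + ⟪B (φ + u), φ⟫) • (φ + u) := by
  set v := ⟪B (φ + u), φ⟫ • (φ + u) - B (φ + u)
  have huφ : ⟪u, φ⟫ = 0 := hu ▸ hRorth v
  have hvφ : ⟪v, φ⟫ = 0 := by
    simp only [v, inner_sub_left, real_inner_smul_left, inner_add_left, huφ,
      real_inner_self_eq_norm_sq, hφ]
    ring
  have hHu : H u - e • u = v := by
    simpa only [show R v = u from hu, hvφ, zero_smul, sub_zero] using hR v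
  rw [add_apply, map_add, heig, sub_eq_iff_eq_add.mp hHu]
  module

end Perturbation

theorem stmt3_general
    (H : lp (fun _ : ℤ => ℝ) 2 →L[ℝ] lp (fun _ : ℤ => ℝ) 2)
    (e : ℝ) (φ : lp (fun _ : ℤ => ℝ) 2) (hφ : ‖φ‖ = 1) (heig : H φ = e • φ)
    (R : lp (fun _ : ℤ => ℝ) 2 →L[ℝ] lp (fun _ : ℤ => ℝ) 2)
    (hR : ∀ u, H (R u) - e • R u = u - ⟪u, φ⟫ • φ)
    (hRorth : ∀ u, ⟪R u, φ⟫ = 0)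
    (C : ℝ) (hC : 0 < C)
    (B : ℝ → (lp (fun _ : ℤ => ℝ) 2 →L[ℝ] lp (fun _ : ℤ => ℝ) 2))
    (hB : ∀ a : ℝ, 0 < a → ‖B a‖ ≤ C * a) :
    ∃ C₀ > 0, ∃ a₀ > 0, ∃ u : ℝ → lp (fun _ : ℤ => ℝ) 2,
      (∀ a : ℝ, 0 < a → a < a₀ →
        ‖u a‖ ≤ 2 * C₀ * a ∧
        u a = R (⟪B a (φ + u a), φ⟫ • (φ + u a) - B a (φ + u a)) ∧
        (H + B a) (φ + u a) = (e + ⟪B a (φ + u a), φ⟫) • (φ + u a)) ∧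
      Filter.Tendsto (fun a => e + ⟪B a (φ + u a), φ⟫)
        (nhdsWithin 0 (Set.Ioi 0)) (nhds e) := by
  set C₀ := 3 * (‖R‖ + 1) * C
  have hC₀ : 0 < C₀ := by positivity
  have ha₀ : 0 < 1 / (2 * C₀) := by positivity
  have hradius : ∀ a ∈ Ioo 0 (1 / (2 * C₀)), 2 * C₀ * a ≤ 1 := fun a ha => by
    have := ha.2
    rw [lt_div_iff₀ (by positivity)] at this
    linarith
  have hfix : ∀ a ∈ Ioo 0 (1 / (2 * C₀)),
      ∃ w, ‖w‖ ≤ 2 * C₀ * a ∧ perturbationMap R (B a) φ w = w := fun a ha =>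
    exists_perturbationMap_eq_self hφ.le (hradius a ha)
      (by nlinarith [hB a ha.1, norm_nonneg R, norm_nonneg (B a)])
  choose! u hu using hfix
  refine ⟨C₀, hC₀, 1 / (2 * C₀), ha₀, u, fun a ha ha' => ?_, ?_⟩
  · obtain ⟨hnorm, hfixed⟩ := hu a ⟨ha, ha'⟩
    exact ⟨hnorm, hfixed.symm,
      add_apply_eq_smul_of_perturbationMap_eq_self hφ heig hR hRorth hfixed⟩
  have hinner : Tendsto (fun a => ⟪B a (φ + u a), φ⟫) (𝓝[>] 0) (𝓝 0) := by
    refine squeeze_zero_norm' (a := fun a => C * a * 2) ?_ (tendsto_nhdsWithin_of_tendsto_nhds ?_)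
    · filter_upwards [Ioo_mem_nhdsGT ha₀] with a ha
      have hw : ‖φ + u a‖ ≤ 2 := (norm_add_le_of_le hφ.le
        ((hu a ha).1.trans (hradius a ha))).trans_eq one_add_one_eq_two
      calc ‖⟪B a (φ + u a), φ⟫‖ ≤ ‖B a‖ * ‖φ + u a‖ :=
            (Real.norm_eq_abs _).trans_le (abs_inner_apply_le_of_norm_le_one (B a) hφ.le _)
        _ ≤ C * a * 2 := mul_le_mul (hB a ha.1) hw (norm_nonneg _) (by positivity [ha.1])
    · simpa using ((continuous_const_mul C).mul_const 2).tendsto (0 : ℝ)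
  simpa using tendsto_const_nhds.add hinner

/-- Construction of an eigenpair of `H + B_a` near `(e, φ)` by a contraction argument:
the fixed point equation `u = (H-e)⁻¹P_c((⟨B_a(φ+u),φ⟩ - B_a)(φ+u))` has a solution `u_a`
with `‖u_a‖ ≤ 2C₀a`, and `(H+B_a)(φ+u_a) = e_a(φ+u_a)` with `e_a = e + ⟨B_a(φ+u_a),φ⟩ → e`.
Here `R` is the bounded inverse `(H-e)⁻¹P_c` (`P_c u = u - ⟨u,φ⟩φ`), which exists since `e`
is an isolated simple eigenvalue. -/
theorem stmt3
    (H : lp (fun _ : ℤ => ℝ) 2 →L[ℝ] lp (fun _ : ℤ => ℝ) 2) (hsa : IsSelfAdjoint H)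
    (e : ℝ) (φ : lp (fun _ : ℤ => ℝ) 2) (hφ : ‖φ‖ = 1) (heig : H φ = e • φ)
    (hsimple : ∀ u, H u = e • u → ∃ c : ℝ, u = c • φ)
    (R : lp (fun _ : ℤ => ℝ) 2 →L[ℝ] lp (fun _ : ℤ => ℝ) 2)
    (hR : ∀ u, H (R u) - e • R u = u - ⟪u, φ⟫ • φ)
    (hRorth : ∀ u, ⟪R u, φ⟫ = 0)
    (C : ℝ) (hC : 0 < C)
    (B : ℝ → (lp (fun _ : ℤ => ℝ) 2 →L[ℝ] lp (fun _ : ℤ => ℝ) 2))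
    (hB : ∀ a : ℝ, 0 < a → ‖B a‖ ≤ C * a) :
    ∃ C₀ > 0, ∃ a₀ > 0, ∃ u : ℝ → lp (fun _ : ℤ => ℝ) 2,
      (∀ a : ℝ, 0 < a → a < a₀ →
        ‖u a‖ ≤ 2 * C₀ * a ∧
        u a = R (⟪B a (φ + u a), φ⟫ • (φ + u a) - B a (φ + u a)) ∧
        (H + B a) (φ + u a) = (e + ⟪B a (φ + u a), φ⟫) • (φ + u a)) ∧
      Filter.Tendsto (fun a => e + ⟪B a (φ + u a), φ⟫)
        (nhdsWithin 0 (Set.Ioi 0)) (nhds e) :=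
  stmt3_general H e φ hφ heig R hR hRorth C hC B hB
end

section
/- Let H = -Δ + V on ℓ²(ℤ) with V(j) → 0 as |j| → ∞, and suppose e ∉ [0,4] is an eigenvalue of H with one-dimensional eigenspace spanned by the normalized eigenfunction φ. Then there exists a > 0 such that φ ∈ ℓ²_{e,a}, i.e. Σ_{j∈ℤ} e^{2a|j|}|φ(j)|² < ∞; in other words, φ decays exponentially. -/
/-!
Writing the eigenvalue equation as `φ (j + 1) + φ (j - 1) = (2 + V j - e) * φ j`, the
coefficient satisfies `|2 + V j - e| ≥ 2 + δ` for some `δ > 0` and all large `|j|`, because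
`e ∉ [0, 4]` and `V → 0`. There `|φ|` is convex; being bounded, it is nonincreasing as `|j|`
grows, and the recurrence then gives
`(1 + δ) |φ j| ≤ |φ (j ∓ 1)|`, i.e. geometric decay at rate `(1 + δ)⁻¹`.
-/

open Filter Topology

lemma antitone_of_convex_of_bddAbove {w : ℕ → ℝ} (hw : BddAbove (Set.range w))
    (hconv : ∀ n, 2 * w (n + 1) ≤ w (n + 2) + w n) : Antitone w := by
  -- The increments are nondecreasing, so a single positive one forces linear growth.
  refine antitone_nat_of_succ_le fun n => not_lt.1 fun hlt => ?_
  set d := w (n + 1) - w n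
  have hincr : ∀ k : ℕ, d ≤ w (n + k + 1) - w (n + k) := by
    intro k
    induction k with
    | zero => simp [d]
    | succ k ih =>
      have := hconv (n + k)
      rw [show n + (k + 1) = n + k + 1 by ring, show n + k + 1 + 1 = n + k + 2 by ring]
      linarith
  have hlin : ∀ k : ℕ, w n + k * d ≤ w (n + k) := by
    intro k
    induction k with
    | zero => simp
    | succ k ih =>
      have := hincr k
      push_cast
      rw [← add_assoc]
      linarith
  obtain ⟨B, hB⟩ := hw
  obtain ⟨k, hk⟩ := exists_nat_gt ((B - w n) / d)
  rw [div_lt_iff₀ (sub_pos.2 hlt)] at hk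
  linarith [hlin k, hB ⟨n + k, rfl⟩]

lemma one_add_pow_mul_le {w : ℕ → ℝ} {δ : ℝ} (hδ : 0 ≤ δ) (hw0 : ∀ n, 0 ≤ w n)
    (hw : BddAbove (Set.range w)) (hstep : ∀ n, (2 + δ) * w (n + 1) ≤ w (n + 2) + w n)
    (n : ℕ) : (1 + δ) ^ n * w n ≤ w 0 := by
  have hanti : Antitone w :=
    antitone_of_convex_of_bddAbove hw fun n => by nlinarith [hstep n, hw0 (n + 1)]
  have hratio : ∀ n, (1 + δ) * w (n + 1) ≤ w n := fun n => by
    linarith [hstep n, hanti (Nat.le_succ (n + 1))]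
  induction n with
  | zero => simp
  | succ n ih =>
    calc (1 + δ) ^ (n + 1) * w (n + 1) = (1 + δ) ^ n * ((1 + δ) * w (n + 1)) := by ring
      _ ≤ (1 + δ) ^ n * w n := by gcongr; exact hratio n
      _ ≤ w 0 := ih

theorem summable_one_add_pow_mul_sq {v : ℕ → ℝ} {δ : ℝ} (hδ : 0 < δ)
    (hv : Tendsto v atTop (𝓝 0))
    (hstep : ∀ᶠ n in atTop, (2 + δ) * |v (n + 1)| ≤ |v (n + 2)| + |v n|) :
    Summable fun n => (1 + δ) ^ n * v n ^ 2 := by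
  obtain ⟨N, hN⟩ := eventually_atTop.1 hstep
  set w : ℕ → ℝ := fun n => |v (n + N)|
  have hdecay : ∀ n, (1 + δ) ^ n * w n ≤ w 0 :=
    one_add_pow_mul_le hδ.le (fun _ => abs_nonneg _)
      (hv.comp (tendsto_add_atTop_nat N)).abs.bddAbove_range
      fun n => by simpa only [w, add_right_comm] using hN (n + N) (by omega)
  have hr : (1 + δ)⁻¹ < 1 := inv_lt_one_of_one_lt₀ (by linarith)
  rw [← summable_nat_add_iff N]
  refine .of_nonneg_of_le (fun n => by positivity) (fun n => ?_)
    ((summable_geometric_of_lt_one (by positivity) hr).mul_left ((1 + δ) ^ N * w 0 ^ 2))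
  calc (1 + δ) ^ (n + N) * v (n + N) ^ 2
      = (1 + δ) ^ N * ((1 + δ) ^ n * w n) ^ 2 * (1 + δ)⁻¹ ^ n := by
        simp only [w, pow_add, inv_pow]
        field_simp
        rw [sq_abs]
    _ ≤ (1 + δ) ^ N * w 0 ^ 2 * (1 + δ)⁻¹ ^ n := by
        gcongr
        exact hdecay n

theorem summable_one_add_pow_natCast_mul_sq {u : ℤ → ℝ} {δ : ℝ} (hδ : 0 < δ)
    (hu : Tendsto u cofinite (𝓝 0))
    (hstep : ∀ᶠ j in cofinite, (2 + δ) * |u j| ≤ |u (j + 1)| + |u (j - 1)|) :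
    Summable fun n : ℕ => (1 + δ) ^ n * u n ^ 2 := by
  have hcast : Tendsto (fun n : ℕ => (n : ℤ)) atTop cofinite :=
    Nat.cofinite_eq_atTop ▸ Nat.cast_injective.tendsto_cofinite
  refine summable_one_add_pow_mul_sq hδ (hu.comp hcast) ?_
  filter_upwards [(hcast.comp (tendsto_add_atTop_nat 1)).eventually hstep] with n hn
  simp only [Function.comp_apply, Nat.cast_add, Nat.cast_one] at hn
  push_cast
  rwa [add_sub_cancel_right, add_assoc, one_add_one_eq_two] at hn

theorem summable_one_add_pow_natAbs_mul_sq {u : ℤ → ℝ} {δ : ℝ} (hδ : 0 < δ)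
    (hu : Tendsto u cofinite (𝓝 0))
    (hstep : ∀ᶠ j in cofinite, (2 + δ) * |u j| ≤ |u (j + 1)| + |u (j - 1)|) :
    Summable fun j : ℤ => (1 + δ) ^ j.natAbs * u j ^ 2 := by
  have hneg : Tendsto (fun j : ℤ => -j) cofinite cofinite := neg_injective.tendsto_cofinite
  refine summable_int_iff_summable_nat_and_neg.2 ⟨?_, ?_⟩
  · simpa using summable_one_add_pow_natCast_mul_sq hδ hu hstep
  · have hstep' : ∀ᶠ j in cofinite, (2 + δ) * |u (-j)| ≤ |u (-(j + 1))| + |u (-(j - 1))| := by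
      filter_upwards [hneg.eventually hstep] with j hj
      rw [neg_add', neg_sub', sub_neg_eq_add]
      linarith
    simpa using summable_one_add_pow_natCast_mul_sq hδ (hu.comp hneg) hstep'

lemma exists_two_add_le_abs_of_notMem_Icc {ι : Type*} {l : Filter ι} {V : ι → ℝ}
    (hV : Tendsto V l (𝓝 0)) {e : ℝ} (he : e ∉ Set.Icc (0 : ℝ) 4) :
    ∃ δ > 0, ∀ᶠ j in l, 2 + δ ≤ |2 + V j - e| := by
  have he' : 2 < |2 - e| := by
    rcases not_and_or.1 he with h | h <;> rw [not_le] at h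
    · rw [abs_of_pos (by linarith)]; linarith
    · rw [abs_of_neg (by linarith)]; linarith
  refine ⟨(|2 - e| - 2) / 2, by linarith, ?_⟩
  filter_upwards [(by simpa using hV.abs : Tendsto (|V ·|) l (𝓝 0)).eventually
    (gt_mem_nhds (show (0 : ℝ) < (|2 - e| - 2) / 2 by linarith))] with j hj
  have := abs_sub (2 + V j - e) (V j)
  rw [show 2 + V j - e - V j = 2 - e by ring] at this
  linarith

lemma tendsto_zero_of_summable_sq {ι : Type*} {u : ι → ℝ} (hu : Summable fun j => u j ^ 2) :
    Tendsto u cofinite (𝓝 0) := by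
  rw [tendsto_zero_iff_abs_tendsto_zero]
  simpa [Function.comp_def, Real.sqrt_sq_eq_abs] using hu.tendsto_cofinite_zero.sqrt

theorem stmt4_general (V : ℤ → ℝ) (hV : Filter.Tendsto V Filter.cofinite (nhds 0))
    (e : ℝ) (he : e ∉ Set.Icc (0 : ℝ) 4)
    (φ : ℤ → ℝ) (hφ2 : Summable (fun j : ℤ => (φ j) ^ 2))
    (heig : ∀ j : ℤ, -(φ (j + 1) - 2 * φ j + φ (j - 1)) + V j * φ j = e * φ j) :
    ∃ a > 0, Summable (fun j : ℤ => Real.exp (2 * a * |(j : ℝ)|) * (φ j) ^ 2) := by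
  obtain ⟨δ, hδ, hc⟩ := exists_two_add_le_abs_of_notMem_Icc hV he
  have hstep : ∀ᶠ j in cofinite, (2 + δ) * |φ j| ≤ |φ (j + 1)| + |φ (j - 1)| := by
    filter_upwards [hc] with j hj
    calc (2 + δ) * |φ j| ≤ |2 + V j - e| * |φ j| := by gcongr
      _ = |φ (j + 1) + φ (j - 1)| := by rw [← abs_mul]; congr 1; linear_combination heig j
      _ ≤ |φ (j + 1)| + |φ (j - 1)| := abs_add_le _ _
  refine ⟨Real.log (1 + δ) / 2, by have := Real.log_pos (by linarith : (1 : ℝ) < 1 + δ); positivity, ?_⟩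
  refine (summable_one_add_pow_natAbs_mul_sq hδ (tendsto_zero_of_summable_sq hφ2) hstep).congr
    fun j => ?_
  rw [show 2 * (Real.log (1 + δ) / 2) * |(j : ℝ)| = (j.natAbs : ℝ) * Real.log (1 + δ) by
      rw [Nat.cast_natAbs, Int.cast_abs]; ring,
    Real.exp_nat_mul, Real.exp_log (by linarith)]

/-- Exponential decay of eigenfunctions: if `H = -Δ + V` on `ℓ²(ℤ)` with `V(j) → 0`,
`e ∉ [0,4]` is an eigenvalue of `H` with one-dimensional eigenspace spanned by the
normalized eigenfunction `φ`, then `φ ∈ ℓ²_{e,a}` for some `a > 0`,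
i.e. `Σ_j e^{2a|j|} φ(j)² < ∞`. -/
theorem stmt4 (V : ℤ → ℝ) (hV : Filter.Tendsto V Filter.cofinite (nhds 0))
    (e : ℝ) (he : e ∉ Set.Icc (0 : ℝ) 4)
    (φ : ℤ → ℝ) (hφ2 : Summable (fun j : ℤ => (φ j) ^ 2)) (hφn : ∑' j : ℤ, (φ j) ^ 2 = 1)
    (heig : ∀ j : ℤ, -(φ (j + 1) - 2 * φ j + φ (j - 1)) + V j * φ j = e * φ j)
    (hsimple : ∀ ψ : ℤ → ℝ, Summable (fun j : ℤ => (ψ j) ^ 2) →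
      (∀ j : ℤ, -(ψ (j + 1) - 2 * ψ j + ψ (j - 1)) + V j * ψ j = e * ψ j) →
      ∃ c : ℝ, ∀ j, ψ j = c * φ j) :
    ∃ a > 0, Summable (fun j : ℤ => Real.exp (2 * a * |(j : ℝ)|) * (φ j) ^ 2) :=
  stmt4_general V hV e he φ hφ2 heig
end

section
/- Define, for sequences v₁ = {v_{1,n}}_{n≥0}, v₂ = {v_{2,n}}_{n≥0} in X_{a,r} and a real parameter s = |z|² with 0 ≤ s < r², the bilinear convolution-type operation M(s, v₁, v₂) = Σ_{m≥0} s^m m_m(v₁,v₂), where m_0(v₁,v₂)_n = v_{1,n}v_{2,0} + Σ_{0≤n₁≤n} v_{1,n₁}v_{2,n-n₁} and for m ≥ 1, m_m(v₁,v₂)_n = v_{1,n+m}v_{2,m} + v_{1,m}v_{2,n+m}. Then each m_m is a bounded bilinear map on X_{a,r} with ‖m_m(v₁,v₂)‖_{a,r} ≤ 2 r^{-2m} ‖v₁‖_{a,r}‖v₂‖_{a,r}, and consequently for |s| ≤ δ² with δ < r, the series defining M(s,·,·) converges in the space of bounded bilinear operators with ‖M(s,·,·)‖ ≤ 2/(1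 - δ²/r²). -/
/-!
The weight is submultiplicative: `r ^ (i + j) ‖a b‖ ≤ (r ^ i ‖a‖) (r ^ j ‖b‖)`. Hence the weighted
terms of `m_0` are dominated by a rank-one term plus the Cauchy product of the weighted terms of
`v₁` and `v₂`, and, since `r ^ (2m) r ^ n = r ^ (n + m) r ^ m`, those of `m_m` (`m ≥ 1`) are
dominated by `r ^ (-2m)` times two shifted products; both majorants sum to at most
`2 ‖v₁‖ ‖v₂‖`. The series `∑ s ^ m ‖m_m‖` is then dominated by the geometric series
`2 ‖v₁‖ ‖v₂‖ ∑ (s / r²) ^ m`.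
-/

/-- The bilinear convolution-type coefficients `m_m(v₁,v₂)` of the product expansion. -/
noncomputable def mmCoef {E : Type*} [NonUnitalNormedRing E]
    (v₁ v₂ : ℕ → E) (m n : ℕ) : E :=
  if m = 0 then v₁ n * v₂ 0 + ∑ k ∈ Finset.range (n + 1), v₁ k * v₂ (n - k)
  else v₁ (n + m) * v₂ m + v₁ m * v₂ (n + m)

open Finset

/-- `∑' n, weightedTerm r v n` is the norm `‖v‖_{a,r}`, with `ℓ²_{e,a}` replaced by `E`. -/
def weightedTerm {E : Type*} [Norm E] (r : ℝ) (v : ℕ → E) (n : ℕ) : ℝ := r ^ n * ‖v n‖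

section Coefficients

variable {E : Type*} [NonUnitalNormedRing E] {r : ℝ}

lemma weightedTerm_nonneg (hr : 0 ≤ r) (v : ℕ → E) (n : ℕ) : 0 ≤ weightedTerm r v n :=
  mul_nonneg (pow_nonneg hr n) (norm_nonneg _)

lemma pow_add_mul_norm_mul_le (hr : 0 ≤ r) (v₁ v₂ : ℕ → E) (i j : ℕ) :
    r ^ (i + j) * ‖v₁ i * v₂ j‖ ≤ weightedTerm r v₁ i * weightedTerm r v₂ j :=
  calc r ^ (i + j) * ‖v₁ i * v₂ j‖ ≤ r ^ (i + j) * (‖v₁ i‖ * ‖v₂ j‖) :=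
        mul_le_mul_of_nonneg_left (norm_mul_le _ _) (pow_nonneg hr _)
    _ = weightedTerm r v₁ i * weightedTerm r v₂ j := by
        rw [weightedTerm, weightedTerm, pow_add]; ring

lemma weightedTerm_mmCoef_zero_le (hr : 0 ≤ r) (v₁ v₂ : ℕ → E) (n : ℕ) :
    weightedTerm r (mmCoef v₁ v₂ 0) n ≤ weightedTerm r v₁ n * weightedTerm r v₂ 0 +
      ∑ k ∈ range (n + 1), weightedTerm r v₁ k * weightedTerm r v₂ (n - k) := by
  have hcauchy : r ^ n * ‖∑ k ∈ range (n + 1), v₁ k * v₂ (n - k)‖ ≤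
      ∑ k ∈ range (n + 1), weightedTerm r v₁ k * weightedTerm r v₂ (n - k) := by
    refine (mul_le_mul_of_nonneg_left (norm_sum_le _ _) (pow_nonneg hr n)).trans ?_
    rw [mul_sum]
    refine sum_le_sum fun k hk => ?_
    have hkn : k + (n - k) = n := Nat.add_sub_cancel' (Nat.lt_succ_iff.mp (mem_range.mp hk))
    simpa only [hkn] using pow_add_mul_norm_mul_le hr v₁ v₂ k (n - k)
  calc weightedTerm r (mmCoef v₁ v₂ 0) n
      ≤ r ^ (n + 0) * ‖v₁ n * v₂ 0‖ + r ^ n * ‖∑ k ∈ range (n + 1), v₁ k * v₂ (n - k)‖ := by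
        rw [weightedTerm, mmCoef, if_pos rfl, add_zero, ← mul_add]
        exact mul_le_mul_of_nonneg_left (norm_add_le _ _) (pow_nonneg hr n)
    _ ≤ _ := add_le_add (pow_add_mul_norm_mul_le hr v₁ v₂ n 0) hcauchy

lemma pow_two_mul_mul_weightedTerm_mmCoef_le (hr : 0 ≤ r) (v₁ v₂ : ℕ → E) {m : ℕ} (hm : m ≠ 0)
    (n : ℕ) :
    r ^ (2 * m) * weightedTerm r (mmCoef v₁ v₂ m) n ≤ weightedTerm r v₁ (n + m) *
      weightedTerm r v₂ m + weightedTerm r v₁ m * weightedTerm r v₂ (n + m) := by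
  have hpow₁ : r ^ (2 * m) * r ^ n = r ^ (n + m + m) := by rw [← pow_add]; ring_nf
  have hpow₂ : r ^ (2 * m) * r ^ n = r ^ (m + (n + m)) := by rw [← pow_add]; ring_nf
  calc r ^ (2 * m) * weightedTerm r (mmCoef v₁ v₂ m) n
      ≤ r ^ (2 * m) * r ^ n * (‖v₁ (n + m) * v₂ m‖ + ‖v₁ m * v₂ (n + m)‖) := by
        rw [weightedTerm, mmCoef, if_neg hm, ← mul_assoc]
        exact mul_le_mul_of_nonneg_left (norm_add_le _ _) (by positivity)
    _ = r ^ (n + m + m) * ‖v₁ (n + m) * v₂ m‖ + r ^ (m + (n + m)) * ‖v₁ m * v₂ (n + m)‖ := by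
        rw [mul_add, ← hpow₁, hpow₂]
    _ ≤ _ := add_le_add (pow_add_mul_norm_mul_le hr v₁ v₂ _ _)
        (pow_add_mul_norm_mul_le hr v₁ v₂ _ _)

end Coefficients

section NonnegSeries

variable {f g : ℕ → ℝ}

lemma summable_and_tsum_le_of_nonneg_of_le {u : ℝ} (hf : ∀ n, 0 ≤ f n) (hfg : ∀ n, f n ≤ g n)
    (hg : Summable g) (hgu : ∑' n, g n ≤ u) : Summable f ∧ ∑' n, f n ≤ u :=
  have hfs := hg.of_nonneg_of_le hf hfg
  ⟨hfs, (hfs.tsum_le_tsum hfg hg).trans hgu⟩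

lemma hasSum_mul_add_sum_range_mul (hf0 : ∀ n, 0 ≤ f n) (hg0 : ∀ n, 0 ≤ g n) (hf : Summable f)
    (hg : Summable g) :
    HasSum (fun n => f n * g 0 + ∑ k ∈ range (n + 1), f k * g (n - k))
      ((∑' n, f n) * g 0 + (∑' n, f n) * ∑' n, g n) := by
  have hfg := hf.mul_of_nonneg hg hf0 hg0
  rw [hf.tsum_mul_tsum_eq_tsum_sum_range hg hfg]
  exact (hf.hasSum.mul_right (g 0)).add (summable_sum_mul_range_of_summable_mul hfg).hasSum

lemma hasSum_nat_add_mul_add_mul_nat_add (hf : Summable f) (hg : Summable g) (m : ℕ) :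
    HasSum (fun n => f (n + m) * g m + f m * g (n + m))
      ((∑' n, f (n + m)) * g m + f m * ∑' n, g (n + m)) :=
  (((summable_nat_add_iff m).mpr hf).hasSum.mul_right (g m)).add
    (((summable_nat_add_iff m).mpr hg).hasSum.mul_left (f m))

lemma tsum_nat_add_le_tsum (hf0 : ∀ n, 0 ≤ f n) (hf : Summable f) (m : ℕ) :
    ∑' n, f (n + m) ≤ ∑' n, f n :=
  tsum_comp_le_tsum_of_inj hf hf0 (add_left_injective m)

lemma summable_pow_mul_and_tsum_le {T : ℕ → ℝ} {K ρ σ s : ℝ} (hT0 : ∀ m, 0 ≤ T m)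
    (hT : ∀ m, T m ≤ K / ρ ^ m) (hs0 : 0 ≤ s) (hsσ : s ≤ σ) (hσρ : σ < ρ) :
    Summable (fun m => s ^ m * T m) ∧ ∑' m, s ^ m * T m ≤ K / (1 - σ / ρ) := by
  have hρ : 0 < ρ := hs0.trans_lt (hsσ.trans_lt hσρ)
  have hK : 0 ≤ K := by simpa using (hT0 0).trans (hT 0)
  have hq0 : 0 ≤ s / ρ := div_nonneg hs0 hρ.le
  have hqσ : s / ρ ≤ σ / ρ := div_le_div_of_nonneg_right hsσ hρ.le
  have hσ1 : σ / ρ < 1 := (div_lt_one hρ).mpr hσρ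
  have hdom (m : ℕ) : s ^ m * T m ≤ K * (s / ρ) ^ m :=
    calc s ^ m * T m ≤ s ^ m * (K / ρ ^ m) := mul_le_mul_of_nonneg_left (hT m) (pow_nonneg hs0 m)
      _ = K * (s / ρ) ^ m := by rw [div_pow]; ring
  refine summable_and_tsum_le_of_nonneg_of_le (fun m => mul_nonneg (pow_nonneg hs0 m) (hT0 m))
    hdom ((summable_geometric_of_lt_one hq0 (hqσ.trans_lt hσ1)).mul_left K) ?_
  rw [tsum_mul_left, tsum_geometric_of_lt_one hq0 (hqσ.trans_lt hσ1), ← div_eq_mul_inv]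
  gcongr

end NonnegSeries

section Bounds

variable {E : Type*} [NonUnitalNormedRing E] {r : ℝ} {v₁ v₂ : ℕ → E}

lemma summable_weightedTerm_mmCoef_and_tsum_le (hr : 0 < r) (h₁ : Summable (weightedTerm r v₁))
    (h₂ : Summable (weightedTerm r v₂)) (m : ℕ) :
    Summable (weightedTerm r (mmCoef v₁ v₂ m)) ∧ ∑' n, weightedTerm r (mmCoef v₁ v₂ m) n ≤
      2 / r ^ (2 * m) * ((∑' n, weightedTerm r v₁ n) * ∑' n, weightedTerm r v₂ n) := by
  have hw₁ := weightedTerm_nonneg hr.le v₁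
  have hw₂ := weightedTerm_nonneg hr.le v₂
  have hA : 0 ≤ ∑' n, weightedTerm r v₁ n := tsum_nonneg hw₁
  rcases eq_or_ne m 0 with rfl | hm
  · have H := hasSum_mul_add_sum_range_mul hw₁ hw₂ h₁ h₂
    refine summable_and_tsum_le_of_nonneg_of_le (weightedTerm_nonneg hr.le _)
      (weightedTerm_mmCoef_zero_le hr.le v₁ v₂) H.summable ?_
    rw [H.tsum_eq, mul_zero, pow_zero, div_one, two_mul]
    gcongr
    exact h₂.le_tsum 0 fun k _ => hw₂ k
  · have H := hasSum_nat_add_mul_add_mul_nat_add h₁ h₂ m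
    have hr2m : 0 < r ^ (2 * m) := pow_pos hr _
    refine summable_and_tsum_le_of_nonneg_of_le (weightedTerm_nonneg hr.le _)
      (fun n => (le_inv_mul_iff₀ hr2m).mpr
        (pow_two_mul_mul_weightedTerm_mmCoef_le hr.le v₁ v₂ hm n))
      (H.summable.mul_left _) ?_
    rw [tsum_mul_left, H.tsum_eq, inv_mul_eq_div, div_mul_eq_mul_div]
    refine div_le_div_of_nonneg_right ?_ hr2m.le
    rw [two_mul]
    exact add_le_add
      (mul_le_mul (tsum_nat_add_le_tsum hw₁ h₁ m) (h₂.le_tsum m fun k _ => hw₂ k) (hw₂ m) hA)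
      (mul_le_mul (h₁.le_tsum m fun k _ => hw₁ k) (tsum_nat_add_le_tsum hw₂ h₂ m)
        (tsum_nonneg fun n => hw₂ (n + m)) hA)

end Bounds

/-- Each `m_m` is bounded on `X_{a,r}` with `‖m_m(v₁,v₂)‖_{a,r} ≤ 2r^{-2m}‖v₁‖‖v₂‖`, and
for `0 ≤ s ≤ δ² < r²` the series `M(s,v₁,v₂) = Σ_m s^m m_m(v₁,v₂)` converges with total
bound `2/(1 - δ²/r²)·‖v₁‖‖v₂‖`. -/
theorem stmt8 {E : Type*} [NonUnitalNormedRing E]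
    (r δ : ℝ) (hr : 0 < r) (hδ : 0 < δ) (hδr : δ < r)
    (v₁ v₂ : ℕ → E)
    (h₁ : Summable (fun n => r ^ n * ‖v₁ n‖)) (h₂ : Summable (fun n => r ^ n * ‖v₂ n‖)) :
    (∀ m : ℕ, Summable (fun n => r ^ n * ‖mmCoef v₁ v₂ m n‖) ∧
      ∑' n, r ^ n * ‖mmCoef v₁ v₂ m n‖ ≤
        2 / r ^ (2 * m) * ((∑' n, r ^ n * ‖v₁ n‖) * ∑' n, r ^ n * ‖v₂ n‖)) ∧
    ∀ s : ℝ, 0 ≤ s → s ≤ δ ^ 2 →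
      Summable (fun m => s ^ m * ∑' n, r ^ n * ‖mmCoef v₁ v₂ m n‖) ∧
      ∑' m, s ^ m * ∑' n, r ^ n * ‖mmCoef v₁ v₂ m n‖ ≤
        2 / (1 - δ ^ 2 / r ^ 2) * ((∑' n, r ^ n * ‖v₁ n‖) * ∑' n, r ^ n * ‖v₂ n‖) := by
  have key := summable_weightedTerm_mmCoef_and_tsum_le hr h₁ h₂
  refine ⟨key, fun s hs0 hs => ?_⟩
  rw [div_mul_eq_mul_div]
  refine summable_pow_mul_and_tsum_le (fun m => tsum_nonneg (weightedTerm_nonneg hr.le _))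
    (fun m => (key m).2.trans_eq ?_) hs0 hs (pow_lt_pow_left₀ hδr hδ.le two_ne_zero)
  rw [div_mul_eq_mul_div, pow_mul]
  rfl
end
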